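/- arXiv:2109.06373 — 2 statements merged into one kernel-verified Lean document; each statement's English description precedes it below -/
import Mathlib

section
/- The number of noncrossing set partitions of {1,...,n} with exactly k blocks equals the Narayana number Nar(n,k) = (1/n)·binom(n,k)·binom(n,k−1). -/
/-!
A noncrossing partition is determined by the set `S` of its block minima and the set `T` of its
block maxima. Scanning `[n]` from left to right, the number of blocks open at `i` is
`#{s ∈ S | s ≤ i} - #{t ∈ T | t < i}`, and by noncrossingness `i < j` lie in the same block exactly
when this number is the same at `i` and `j` and no gap between them is crossed by fewer blocks.
Conversely every pair of `k`-sets with a positive number of open blocks everywhere (a ballot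
condition) arises, so noncrossing partitions with `k` blocks are counted by such pairs.

Shifting `T` by one turns the pair into two lattice paths of which the first must stay strictly
above the second. Swapping the tails after the first meeting point is a bijection between the
paths that meet and all pairs of `k`-subsets of `[0, n]` and `[1, n - 1]`, so the count is
`C(n,k)^2 - C(n+1,k) C(n-1,k) = C(n,k) C(n,k-1) / n`.
-/

open Finset

/-- A set partition of `[n]` is noncrossing if whenever `a < b < c < d` with `a,c` in a
block `B` and `b,d` in a block `C`, then `B = C`. -/
def Noncrossing {n : ℕ} (π : Finpartition (Finset.univ : Finset (Fin n))) : Prop :=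
  ∀ B ∈ π.parts, ∀ C ∈ π.parts, ∀ a b c d : Fin n,
    a < b → b < c → c < d → a ∈ B → c ∈ B → b ∈ C → d ∈ C → B = C

section Levels

variable {α : Type*} [LinearOrder α]

/- For the block minima `S` and maxima `T` of a partition, `levelAt S T i` counts the blocks
whose span contains `i`, and `levelBefore S T m` those with elements on both sides of the gap
just before `m` (`Finpartition.levelAt_blockMins_blockMaxs`). -/
def levelAt (S T : Finset α) (i : α) : ℤ := #{s ∈ S | s ≤ i} - #{t ∈ T | t < i}

def levelBefore (S T : Finset α) (m : α) : ℤ := #{s ∈ S | s < m} - #{t ∈ T | t < m}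

def levelAfter (S T : Finset α) (m : α) : ℤ := #{s ∈ S | s ≤ m} - #{t ∈ T | t ≤ m}

lemma card_filter_le_eq_card_filter_lt_add (S : Finset α) (i : α) :
    (#{s ∈ S | s ≤ i} : ℤ) = #{s ∈ S | s < i} + if i ∈ S then 1 else 0 := by
  have : {s ∈ S | s ≤ i} = {s ∈ S | s < i} ∪ {s ∈ S | s = i} := by
    ext; simp [le_iff_lt_or_eq, and_or_left]
  rw [this, card_union_of_disjoint (disjoint_filter.2 fun _ _ h => h.ne), filter_eq']
  split_ifs <;> simp

variable (S T : Finset α)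

lemma levelAt_eq_levelBefore_add (i : α) :
    levelAt S T i = levelBefore S T i + if i ∈ S then 1 else 0 := by
  simp only [levelAt, levelBefore, card_filter_le_eq_card_filter_lt_add S]
  ring

lemma levelBefore_le_levelAt (i : α) : levelBefore S T i ≤ levelAt S T i := by
  rw [levelAt_eq_levelBefore_add]
  split_ifs <;> omega

lemma levelAfter_eq_levelAt_sub (i : α) :
    levelAfter S T i = levelAt S T i - if i ∈ T then 1 else 0 := by
  simp only [levelAt, levelAfter, card_filter_le_eq_card_filter_lt_add T]
  ring

lemma levelBefore_eq_levelAfter_of_covBy {j m : α} (h : j ⋖ m) :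
    levelBefore S T m = levelAfter S T j := by
  simp only [levelBefore, levelAfter, h.lt_iff_le_left]

lemma levelBefore_eq_zero_of_forall_le {x : α} (hx : ∀ z, x ≤ z) : levelBefore S T x = 0 := by
  simp [levelBefore, filter_false_of_mem, hx]

lemma levelAfter_eq_of_forall_le {x : α} (hx : ∀ z, z ≤ x) :
    levelAfter S T x = #S - #T := by
  simp [levelAfter, hx]

def IsBallot (S T : Finset α) : Prop := ∀ i, 0 < levelAt S T i

end Levels


namespace Finpartition

lemma ext_part {α : Type*} [DecidableEq α] {s : Finset α} {P Q : Finpartition s}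
    (h : ∀ a ∈ s, P.part a = Q.part a) : P = Q := by
  ext B
  constructor
  · intro hB
    obtain ⟨a, ha, rfl⟩ := P.part_surjOn hB
    rw [h a ha]
    exact Q.part_mem.2 ha
  · intro hB
    obtain ⟨a, ha, rfl⟩ := Q.part_surjOn hB
    rw [← h a ha]
    exact P.part_mem.2 ha

lemma mem_part_comm {α : Type*} [DecidableEq α] {s : Finset α} (P : Finpartition s) {a b : α} :
    a ∈ P.part b ↔ b ∈ P.part a := by
  simp only [mem_part_iff_exists, and_comm]

variable {α : Type*} [LinearOrder α] [Fintype α] (P : Finpartition (univ : Finset α))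

def blockMins : Finset α := {i | ∀ j ∈ P.part i, i ≤ j}

def blockMaxs : Finset α := {i | ∀ j ∈ P.part i, j ≤ i}

def blocksAround (i : α) : Finset (Finset α) :=
  {B ∈ P.parts | (∃ a ∈ B, a ≤ i) ∧ ∃ b ∈ B, i ≤ b}

def blocksAcross (m : α) : Finset (Finset α) :=
  {B ∈ P.parts | (∃ a ∈ B, a < m) ∧ ∃ b ∈ B, m ≤ b}

lemma mem_blockMins {i : α} : i ∈ P.blockMins ↔ ∀ j ∈ P.part i, i ≤ j := by
  simp [blockMins]

lemma mem_blockMaxs {i : α} : i ∈ P.blockMaxs ↔ ∀ j ∈ P.part i, j ≤ i := by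
  simp [blockMaxs]

lemma mem_blocksAround {i : α} {B : Finset α} :
    B ∈ P.blocksAround i ↔ B ∈ P.parts ∧ (∃ a ∈ B, a ≤ i) ∧ ∃ b ∈ B, i ≤ b :=
  mem_filter

lemma mem_blocksAcross {m : α} {B : Finset α} :
    B ∈ P.blocksAcross m ↔ B ∈ P.parts ∧ (∃ a ∈ B, a < m) ∧ ∃ b ∈ B, m ≤ b :=
  mem_filter

variable {P}

lemma min'_mem_blockMins {B : Finset α} (hB : B ∈ P.parts) :
    B.min' (P.nonempty_of_mem_parts hB) ∈ P.blockMins := by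
  rw [mem_blockMins, P.part_eq_of_mem hB (min'_mem _ _)]
  exact fun j hj => min'_le _ _ hj

lemma max'_mem_blockMaxs {B : Finset α} (hB : B ∈ P.parts) :
    B.max' (P.nonempty_of_mem_parts hB) ∈ P.blockMaxs := by
  rw [mem_blockMaxs, P.part_eq_of_mem hB (max'_mem _ _)]
  exact fun j hj => le_max' _ _ hj

variable (P) {Q : α → Prop} [DecidablePred Q]

lemma card_filter_blockMins (hQ : ∀ ⦃x y⦄, x ≤ y → Q y → Q x) :
    #{s ∈ P.blockMins | Q s} = #{B ∈ P.parts | ∃ a ∈ B, Q a} := by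
  refine card_bij (fun s _ => P.part s) (fun s hs => ?_) (fun s hs t ht hst => ?_) fun B hB => ?_
  · simp only [mem_filter] at hs ⊢
    exact ⟨P.part_mem.2 (mem_univ s), s, P.mem_part (mem_univ s), hs.2⟩
  · simp only [mem_filter, mem_blockMins] at hs ht
    have hts : t ∈ P.part s := hst ▸ P.mem_part (mem_univ t)
    have hst' : s ∈ P.part t := hst ▸ P.mem_part (mem_univ s)
    exact le_antisymm (hs.1 t hts) (ht.1 s hst')
  · obtain ⟨hB, a, ha, hQa⟩ := mem_filter.1 hB
    refine ⟨_, mem_filter.2 ⟨min'_mem_blockMins hB, hQ (min'_le _ _ ha) hQa⟩, ?_⟩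
    exact P.part_eq_of_mem hB (min'_mem _ _)

lemma card_filter_blockMaxs (hQ : ∀ ⦃x y⦄, x ≤ y → Q y → Q x) :
    #{t ∈ P.blockMaxs | Q t} = #{B ∈ P.parts | ∀ b ∈ B, Q b} := by
  refine card_bij (fun t _ => P.part t) (fun t ht => ?_) (fun s hs t ht hst => ?_) fun B hB => ?_
  · simp only [mem_filter, mem_blockMaxs] at ht ⊢
    exact ⟨P.part_mem.2 (mem_univ t), fun b hb => hQ (ht.1 b hb) ht.2⟩
  · simp only [mem_filter, mem_blockMaxs] at hs ht
    have hts : t ∈ P.part s := hst ▸ P.mem_part (mem_univ t)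
    have hst' : s ∈ P.part t := hst ▸ P.mem_part (mem_univ s)
    exact le_antisymm (ht.1 s hst') (hs.1 t hts)
  · obtain ⟨hB, hQB⟩ := mem_filter.1 hB
    refine ⟨_, mem_filter.2 ⟨max'_mem_blockMaxs hB, hQB _ (max'_mem _ _)⟩, ?_⟩
    exact P.part_eq_of_mem hB (max'_mem _ _)

lemma card_blockMins : #P.blockMins = #P.parts := by
  have h := P.card_filter_blockMins (Q := fun _ => True) (by simp)
  rwa [filter_true_of_mem fun _ _ => trivial, filter_true_of_mem fun B hB =>
    (P.nonempty_of_mem_parts hB).elim fun a ha => ⟨a, ha, trivial⟩] at h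

lemma card_blockMaxs : #P.blockMaxs = #P.parts := by
  have h := P.card_filter_blockMaxs (Q := fun _ => True) (by simp)
  rwa [filter_true_of_mem fun _ _ => trivial, filter_true_of_mem fun _ _ _ _ => trivial] at h

lemma card_filter_blockMins_sub_card_filter_blockMaxs {Q' : α → Prop} [DecidablePred Q']
    (hQ : ∀ ⦃x y⦄, x ≤ y → Q y → Q x) (hQ' : ∀ ⦃x y⦄, x ≤ y → Q' y → Q' x)
    (hQQ' : ∀ x, Q' x → Q x) :
    (#{s ∈ P.blockMins | Q s} : ℤ) - #{t ∈ P.blockMaxs | Q' t} =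
      #{B ∈ P.parts | (∃ a ∈ B, Q a) ∧ ∃ b ∈ B, ¬ Q' b} := by
  have hsub : {B ∈ P.parts | ∀ b ∈ B, Q' b} ⊆ {B ∈ P.parts | ∃ a ∈ B, Q a} := by
    intro B hB
    obtain ⟨hB, hQ'B⟩ := mem_filter.1 hB
    obtain ⟨b, hb⟩ := P.nonempty_of_mem_parts hB
    exact mem_filter.2 ⟨hB, b, hb, hQQ' b (hQ'B b hb)⟩
  rw [P.card_filter_blockMins hQ, P.card_filter_blockMaxs hQ', ← Nat.cast_sub (card_le_card hsub),
    ← card_sdiff_of_subset hsub]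
  congr 2
  ext B
  simp only [mem_sdiff, mem_filter, not_and, not_forall, exists_prop]
  tauto

lemma levelAt_blockMins_blockMaxs (i : α) :
    levelAt P.blockMins P.blockMaxs i = #(P.blocksAround i) := by
  rw [levelAt, P.card_filter_blockMins_sub_card_filter_blockMaxs (fun _ _ => le_trans)
    (fun _ _ => lt_of_le_of_lt) (fun _ => le_of_lt)]
  simp [blocksAround]

lemma levelBefore_blockMins_blockMaxs (m : α) :
    levelBefore P.blockMins P.blockMaxs m = #(P.blocksAcross m) := by
  rw [levelBefore, P.card_filter_blockMins_sub_card_filter_blockMaxs (fun _ _ => lt_of_le_of_lt)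
    (fun _ _ => lt_of_le_of_lt) (fun _ h => h)]
  simp [blocksAcross]

lemma levelAt_blockMins_blockMaxs_pos (i : α) : 0 < levelAt P.blockMins P.blockMaxs i := by
  rw [levelAt_blockMins_blockMaxs, Nat.cast_pos, card_pos]
  have hi := P.mem_part (mem_univ i)
  exact ⟨P.part i, P.mem_blocksAround.2 ⟨P.part_mem.2 (mem_univ i), ⟨i, hi, le_rfl⟩, i, hi, le_rfl⟩⟩

end Finpartition

section LevelSetoid

variable {α : Type*} [LinearOrder α]

lemma Set.uIoc_subset_uIoc_union_uIoc {a b c : α} :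
    Set.uIoc a c ⊆ Set.uIoc a b ∪ Set.uIoc b c := by
  intro x
  simp only [Set.mem_union, Set.mem_uIoc]
  grind

/- By `Noncrossing.mem_part_iff`, these are the blocks of a noncrossing partition with block minima
`S` and block maxima `T`. -/
def levelSetoid (S T : Finset α) : Setoid α where
  r i j := levelAt S T i = levelAt S T j ∧ ∀ m ∈ Set.uIoc i j, levelAt S T i ≤ levelBefore S T m
  iseqv :=
    { refl i := ⟨rfl, by simp⟩
      symm := fun ⟨hij, h⟩ => ⟨hij.symm, fun m hm => hij ▸ h m (by rwa [Set.uIoc_comm])⟩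
      trans := fun ⟨hij, h₁⟩ ⟨hjk, h₂⟩ => ⟨hij.trans hjk, fun m hm =>
        (Set.uIoc_subset_uIoc_union_uIoc hm).elim (h₁ m) (hij ▸ h₂ m)⟩ }

lemma levelSetoid_iff_of_le {S T : Finset α} {i j : α} (hij : i ≤ j) :
    levelSetoid S T i j ↔
      levelAt S T i = levelAt S T j ∧ ∀ m, i < m → m ≤ j → levelAt S T i ≤ levelBefore S T m := by
  change _ ∧ _ ↔ _
  simp [Set.uIoc_of_le hij]

end LevelSetoid

section Noncrossing

variable {n : ℕ} {P : Finpartition (univ : Finset (Fin n))}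

lemma Noncrossing.lt_and_lt_of_mem (hP : Noncrossing P) {B C : Finset (Fin n)} (hB : B ∈ P.parts)
    (hC : C ∈ P.parts) (hBC : B ≠ C) {a b x q : Fin n} (ha : a ∈ B) (hb : b ∈ B) (hx : x ∈ C)
    (hax : a ≤ x) (hxb : x ≤ b) (hq : q ∈ C) : a < q ∧ q < b := by
  have hne : ∀ {y z}, y ∈ B → z ∈ C → y ≠ z := fun hy hz h =>
    hBC (P.eq_of_mem_parts hB hC hy (h ▸ hz))
  have hax' := lt_of_le_of_ne hax (hne ha hx)
  have hxb' := lt_of_le_of_ne hxb (hne hb hx).symm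
  constructor
  · by_contra! hqa
    exact hBC (hP C hC B hB q a x b (lt_of_le_of_ne hqa (hne ha hq).symm) hax' hxb' hq hx ha
      hb).symm
  · by_contra! hbq
    exact hBC (hP B hB C hC a x b q hax' hxb' (lt_of_le_of_ne hbq (hne hb hq)) ha hb hx hq)

lemma Noncrossing.exists_lt_and_lt_of_mem_blocksAround (hP : Noncrossing P) {i : Fin n}
    {B : Finset (Fin n)} (hB : B ∈ P.blocksAround i) (hBi : B ≠ P.part i) :
    ∃ a ∈ B, ∃ b ∈ B, ∀ q ∈ P.part i, a < q ∧ q < b := by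
  obtain ⟨hB, ⟨a, ha, hai⟩, b, hb, hib⟩ := P.mem_blocksAround.1 hB
  exact ⟨a, ha, b, hb, fun q => hP.lt_and_lt_of_mem hB (P.part_mem.2 (mem_univ i)) hBi ha hb
    (P.mem_part (mem_univ i)) hai hib⟩

lemma Noncrossing.blocksAround_subset (hP : Noncrossing P) {i j : Fin n} (hj : j ∈ P.part i) :
    P.blocksAround i ⊆ P.blocksAround j := by
  intro B hB
  refine P.mem_blocksAround.2 ⟨(P.mem_blocksAround.1 hB).1, ?_⟩
  by_cases hBi : B = P.part i
  · exact ⟨⟨j, hBi ▸ hj, le_rfl⟩, j, hBi ▸ hj, le_rfl⟩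
  · obtain ⟨a, ha, b, hb, hab⟩ := hP.exists_lt_and_lt_of_mem_blocksAround hB hBi
    exact ⟨⟨a, ha, (hab j hj).1.le⟩, b, hb, (hab j hj).2.le⟩

lemma Noncrossing.blocksAround_subset_blocksAcross (hP : Noncrossing P) {i j m : Fin n}
    (hj : j ∈ P.part i) (him : i < m) (hmj : m ≤ j) : P.blocksAround i ⊆ P.blocksAcross m := by
  intro B hB
  refine P.mem_blocksAcross.2 ⟨(P.mem_blocksAround.1 hB).1, ?_⟩
  by_cases hBi : B = P.part i
  · have hi := P.mem_part (mem_univ i)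
    exact ⟨⟨i, hBi ▸ hi, him⟩, j, hBi ▸ hj, hmj⟩
  · obtain ⟨a, ha, b, hb, hab⟩ := hP.exists_lt_and_lt_of_mem_blocksAround hB hBi
    exact ⟨⟨a, ha, (hab i (P.mem_part (mem_univ i))).1.trans him⟩, b, hb, hmj.trans (hab j hj).2.le⟩

lemma Noncrossing.card_blocksAcross_lt (hP : Noncrossing P) {x y m : Fin n} (hy : y ∈ P.part x)
    (hxm : P.part x ∉ P.blocksAcross m) (hym : ∀ z < m, z ≤ y) (hmy : ∀ z, m ≤ z → y ≤ z) :
    #(P.blocksAcross m) < #(P.blocksAround x) := by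
  have hD := P.part_mem.2 (mem_univ x)
  have hxx := P.mem_part (mem_univ x)
  have hsub : insert (P.part x) (P.blocksAcross m) ⊆ P.blocksAround x := by
    refine insert_subset (P.mem_blocksAround.2 ⟨hD, ⟨x, hxx, le_rfl⟩, x, hxx, le_rfl⟩)
      fun B hB => ?_
    obtain ⟨hB', ⟨a, ha, ham⟩, b, hb, hmb⟩ := P.mem_blocksAcross.1 hB
    have := hP.lt_and_lt_of_mem hB' hD (ne_of_mem_of_not_mem hB hxm) ha hb hy (hym a ham)
      (hmy b hmb) hxx
    exact P.mem_blocksAround.2 ⟨hB', ⟨a, ha, this.1.le⟩, b, hb, this.2.le⟩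
  calc #(P.blocksAcross m) < #(insert (P.part x) (P.blocksAcross m)) := by
        rw [card_insert_of_notMem hxm]; omega
    _ ≤ _ := card_le_card hsub

lemma Noncrossing.levelSetoid_of_mem_part (hP : Noncrossing P) {i j : Fin n} (hij : i ≤ j)
    (hj : j ∈ P.part i) : levelSetoid P.blockMins P.blockMaxs i j := by
  have hi : i ∈ P.part j := P.mem_part_comm.1 hj
  simp only [levelSetoid_iff_of_le hij, P.levelAt_blockMins_blockMaxs,
    P.levelBefore_blockMins_blockMaxs, Nat.cast_le, Nat.cast_inj]
  exact ⟨congrArg card ((hP.blocksAround_subset hj).antisymm (hP.blocksAround_subset hi)),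
    fun m him hmj => card_le_card (hP.blocksAround_subset_blocksAcross hj him hmj)⟩

lemma Noncrossing.mem_part_of_levelSetoid (hP : Noncrossing P) {i j : Fin n} (hij : i ≤ j)
    (h : levelSetoid P.blockMins P.blockMaxs i j) : j ∈ P.part i := by
  rw [levelSetoid_iff_of_le hij] at h
  simp only [P.levelAt_blockMins_blockMaxs, P.levelBefore_blockMins_blockMaxs, Nat.cast_le,
    Nat.cast_inj] at h
  obtain ⟨heq, hle⟩ := h
  by_contra hji
  have hi := P.mem_part (mem_univ i)
  have hj := P.mem_part (mem_univ j)
  have hne : P.part i ≠ P.part j := fun h => hji (h ▸ hj)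
  set c := (P.part i).max' ⟨i, hi⟩
  set e := (P.part j).min' ⟨j, hj⟩
  have hc : c ∈ P.part i := max'_mem _ _
  have he : e ∈ P.part j := min'_mem _ _
  have hic : i ≤ c := le_max' _ _ hi
  have hej : e ≤ j := min'_le _ _ hj
  -- Either the block of `i` ends before `j`, or the block of `j` starts after `i`, and then fewer
  -- blocks cross the gap there than are open at `i`; or the two blocks cross: `e < i < j < c`.
  by_cases hcj : c < j
  · obtain ⟨m, hcm, hmj⟩ := exists_covBy_le_of_lt hcj
    refine (hle m (hic.trans_lt hcm.lt) hmj).not_gt (hP.card_blocksAcross_lt hc ?_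
      (fun z => hcm.le_of_lt) fun z hz => hcm.lt.le.trans hz)
    exact fun hmem => by
      obtain ⟨-, -, b, hb, hmb⟩ := P.mem_blocksAcross.1 hmem
      exact (hcm.lt.trans_le hmb).not_ge (le_max' _ _ hb)
  by_cases hie : i < e
  · refine (heq ▸ hle e hie hej).not_gt (hP.card_blocksAcross_lt he ?_
      (fun z hz => hz.le) fun z hz => hz)
    exact fun hmem => by
      obtain ⟨-, ⟨a, ha, hae⟩, -⟩ := P.mem_blocksAcross.1 hmem
      exact hae.not_ge (min'_le _ _ ha)
  have hdistinct : ∀ {y z}, y ∈ P.part i → z ∈ P.part j → y ≠ z := fun hy hz h =>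
    hne (P.eq_of_mem_parts (P.part_mem.2 (mem_univ i)) (P.part_mem.2 (mem_univ j)) hy (h ▸ hz))
  have hij' := lt_of_le_of_ne hij (hdistinct hi hj)
  exact hne (hP _ (P.part_mem.2 (mem_univ j)) _ (P.part_mem.2 (mem_univ i)) e i j c
    (lt_of_le_of_ne (not_lt.1 hie) (hdistinct hi he).symm) hij'
    (lt_of_le_of_ne (not_lt.1 hcj) (hdistinct hc hj).symm) he hj hi hc).symm

lemma Noncrossing.mem_part_iff (hP : Noncrossing P) {i j : Fin n} :
    j ∈ P.part i ↔ levelSetoid P.blockMins P.blockMaxs i j := by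
  wlog hij : i ≤ j generalizing i j
  · rw [P.mem_part_comm, this (le_of_not_ge hij)]
    exact ⟨(levelSetoid _ _).symm', (levelSetoid _ _).symm'⟩
  exact ⟨hP.levelSetoid_of_mem_part hij, hP.mem_part_of_levelSetoid hij⟩

end Noncrossing

section OfMinsMaxs

variable {α : Type*} [LinearOrder α] [Fintype α] {S T : Finset α}

instance : Decidable (IsBallot S T) := inferInstanceAs (Decidable (∀ i, 0 < levelAt S T i))

open Classical in
noncomputable def Finpartition.ofMinsMaxs (S T : Finset α) : Finpartition (univ : Finset α) :=
  Finpartition.ofSetoid (levelSetoid S T)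

lemma Finpartition.mem_part_ofMinsMaxs {i j : α} :
    j ∈ (ofMinsMaxs S T).part i ↔ levelSetoid S T i j := by
  classical
  exact Finpartition.mem_part_ofSetoid_iff_rel

lemma exists_lt_levelSetoid_of_notMem (hST : IsBallot S T) {i : α} (hiS : i ∉ S) :
    ∃ j < i, levelSetoid S T j i := by
  set L := levelAt S T i
  have hLi : levelBefore S T i = L := by simp [L, levelAt_eq_levelBefore_add, hiS]
  have hne : ({m | m ≤ i ∧ levelBefore S T m < L} : Finset α).Nonempty := by
    refine ⟨univ.min' ⟨i, mem_univ i⟩, mem_filter.2 ⟨mem_univ _, min'_le _ _ (mem_univ i), ?_⟩⟩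
    rw [levelBefore_eq_zero_of_forall_le S T fun z => min'_le _ _ (mem_univ z)]
    exact hST i
  obtain ⟨j, hj, hjmax⟩ := exists_max_image _ id hne
  obtain ⟨-, hj_le, hjL⟩ := mem_filter.1 hj
  have hge : ∀ m, j < m → m ≤ i → L ≤ levelBefore S T m := fun m hjm hmi => by
    by_contra! hm
    exact hjm.not_ge (hjmax m (mem_filter.2 ⟨mem_univ _, hmi, hm⟩))
  have hji : j < i := lt_of_le_of_ne hj_le (by rintro rfl; omega)
  obtain ⟨m, hjm, hmi⟩ := exists_covBy_le_of_lt hji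
  have hjL : levelAt S T j = L := by
    have h₁ := hge m hjm.lt hmi
    rw [levelBefore_eq_levelAfter_of_covBy S T hjm, levelAfter_eq_levelAt_sub] at h₁
    have h₂ := levelAt_eq_levelBefore_add S T j
    split_ifs at h₁ h₂ <;> omega
  exact ⟨j, hji, (levelSetoid_iff_of_le hji.le).2 ⟨hjL, fun m h₁ h₂ => hjL ▸ hge m h₁ h₂⟩⟩

lemma exists_gt_levelSetoid_of_notMem (hST : IsBallot S T) (hc : #S = #T) {i : α}
    (hiT : i ∉ T) : ∃ j > i, levelSetoid S T i j := by
  set L := levelAt S T i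
  have hLi : levelAfter S T i = L := by simp [L, levelAfter_eq_levelAt_sub, hiT]
  have hne : ({m | i ≤ m ∧ levelAfter S T m < L} : Finset α).Nonempty := by
    refine ⟨univ.max' ⟨i, mem_univ i⟩, mem_filter.2 ⟨mem_univ _, le_max' _ _ (mem_univ i), ?_⟩⟩
    rw [levelAfter_eq_of_forall_le S T fun z => le_max' _ _ (mem_univ z), hc, sub_self]
    exact hST i
  obtain ⟨j, hj, hjmin⟩ := exists_min_image _ id hne
  obtain ⟨-, hi_le, hjL⟩ := mem_filter.1 hj
  have hge : ∀ m, i ≤ m → m < j → L ≤ levelAfter S T m := fun m him hmj => by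
    by_contra! hm
    exact hmj.not_ge (hjmin m (mem_filter.2 ⟨mem_univ _, him, hm⟩))
  have hij : i < j := lt_of_le_of_ne hi_le (by rintro rfl; omega)
  have hbefore : ∀ m, i < m → m ≤ j → L ≤ levelBefore S T m := fun m him hmj => by
    obtain ⟨m', hm'i, hm'm⟩ := exists_le_covBy_of_lt him
    rw [levelBefore_eq_levelAfter_of_covBy S T hm'm]
    exact hge m' hm'i (hm'm.lt.trans_le hmj)
  have hjL' : levelAt S T j = L := by
    have h₁ := hbefore j hij le_rfl
    rw [levelAfter_eq_levelAt_sub] at hjL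
    have h₂ := levelAt_eq_levelBefore_add S T j
    split_ifs at hjL h₂ <;> omega
  exact ⟨j, hij, (levelSetoid_iff_of_le hij.le).2 ⟨hjL'.symm, hbefore⟩⟩

namespace Finpartition

lemma blockMins_ofMinsMaxs (hST : IsBallot S T) : (ofMinsMaxs S T).blockMins = S := by
  ext i
  simp only [mem_blockMins, mem_part_ofMinsMaxs]
  constructor
  · intro hmin
    by_contra hiS
    obtain ⟨j, hji, hrel⟩ := exists_lt_levelSetoid_of_notMem hST hiS
    exact (hmin j ((levelSetoid S T).symm' hrel)).not_gt hji
  · intro hiS j hij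
    by_contra! hji
    obtain ⟨heq, hle⟩ := (levelSetoid_iff_of_le hji.le).1 ((levelSetoid S T).symm' hij)
    have h := hle i hji le_rfl
    rw [heq, levelAt_eq_levelBefore_add, if_pos hiS] at h
    omega

lemma blockMaxs_ofMinsMaxs (hST : IsBallot S T) (hc : #S = #T) :
    (ofMinsMaxs S T).blockMaxs = T := by
  ext i
  simp only [mem_blockMaxs, mem_part_ofMinsMaxs]
  constructor
  · intro hmax
    by_contra hiT
    obtain ⟨j, hij, hrel⟩ := exists_gt_levelSetoid_of_notMem hST hc hiT
    exact (hmax j hrel).not_gt hij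
  · intro hiT j hij
    by_contra! hji
    obtain ⟨m, him, hmj⟩ := exists_covBy_le_of_lt hji
    have h := ((levelSetoid_iff_of_le hji.le).1 hij).2 m him.lt hmj
    rw [levelBefore_eq_levelAfter_of_covBy S T him, levelAfter_eq_levelAt_sub, if_pos hiT] at h
    omega

lemma card_parts_ofMinsMaxs (hST : IsBallot S T) : #(ofMinsMaxs S T).parts = #S := by
  rw [← card_blockMins, blockMins_ofMinsMaxs hST]

end Finpartition

end OfMinsMaxs

section Bijection

variable {n : ℕ}

lemma noncrossing_ofMinsMaxs (S T : Finset (Fin n)) :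
    Noncrossing (Finpartition.ofMinsMaxs S T) := by
  intro B hB C hC a b c d hab hbc hcd ha hc hb hd
  set P := Finpartition.ofMinsMaxs S T
  have hac := Finpartition.mem_part_ofMinsMaxs.1 (P.part_eq_of_mem hB ha ▸ hc)
  have hbd := Finpartition.mem_part_ofMinsMaxs.1 (P.part_eq_of_mem hC hb ▸ hd)
  obtain ⟨hac₁, hac₂⟩ := (levelSetoid_iff_of_le (hab.trans hbc).le).1 hac
  obtain ⟨-, hbd₂⟩ := (levelSetoid_iff_of_le (hbc.trans hcd).le).1 hbd
  have h₁ := hac₂ b hab hbc.le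
  have h₂ := hbd₂ c hbc hcd.le
  have h₃ := levelBefore_le_levelAt S T b
  have h₄ := levelBefore_le_levelAt S T c
  have hbc' : levelSetoid S T b c := (levelSetoid_iff_of_le hbc.le).2
    ⟨by omega, fun m hbm hmc => by have := hac₂ m (hab.trans hbm) hmc; omega⟩
  exact P.eq_of_mem_parts hB hC hc
    (P.part_eq_of_mem hC hb ▸ Finpartition.mem_part_ofMinsMaxs.2 hbc')

lemma Noncrossing.eq_ofMinsMaxs {P : Finpartition (univ : Finset (Fin n))} (hP : Noncrossing P) :
    P = Finpartition.ofMinsMaxs P.blockMins P.blockMaxs :=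
  Finpartition.ext_part fun i _ => Finset.ext fun j => by
    rw [Finpartition.mem_part_ofMinsMaxs, hP.mem_part_iff]

lemma card_noncrossing_eq_card_ballot (k : ℕ) :
    Nat.card {P : Finpartition (univ : Finset (Fin n)) // Noncrossing P ∧ #P.parts = k} =
      #{p ∈ powersetCard k (univ : Finset (Fin n)) ×ˢ powersetCard k univ | IsBallot p.1 p.2} := by
  classical
  rw [Nat.card_eq_fintype_card, Fintype.card_subtype]
  refine card_nbij' (fun P => (P.blockMins, P.blockMaxs))
    (fun p => Finpartition.ofMinsMaxs p.1 p.2) (fun P hP => ?_) (fun p hp => ?_)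
    (fun P hP => ?_) (fun p hp => ?_)
  · simp only [mem_coe, mem_filter, mem_univ, true_and, mem_product, mem_powersetCard_univ] at hP ⊢
    exact ⟨⟨by rw [P.card_blockMins, hP.2], by rw [P.card_blockMaxs, hP.2]⟩,
      P.levelAt_blockMins_blockMaxs_pos⟩
  · simp only [mem_coe, mem_filter, mem_univ, true_and, mem_product, mem_powersetCard_univ] at hp ⊢
    exact ⟨noncrossing_ofMinsMaxs _ _, by rw [Finpartition.card_parts_ofMinsMaxs hp.2, hp.1.1]⟩
  · simp only [mem_coe, mem_filter, mem_univ, true_and] at hP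
    exact hP.1.eq_ofMinsMaxs.symm
  · simp only [mem_coe, mem_filter, mem_product, mem_powersetCard_univ] at hp
    exact Prod.ext (Finpartition.blockMins_ofMinsMaxs hp.2)
      (Finpartition.blockMaxs_ofMinsMaxs hp.2 (hp.1.1.trans hp.1.2.symm))

end Bijection

section Reflection

/- A pair `(A, B)` stands for two lattice paths whose up-steps are at the elements of `A`,
resp. `B`; `Touches p i` says that they meet after step `i`. -/
def Touches (p : Finset ℕ × Finset ℕ) (i : ℕ) : Prop :=
  #{y ∈ p.2 | y ≤ i} = #{x ∈ p.1 | x ≤ i}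

def StaysAbove (n : ℕ) (p : Finset ℕ × Finset ℕ) : Prop :=
  ∀ i < n, #{y ∈ p.2 | y ≤ i} < #{x ∈ p.1 | x ≤ i}

instance (n : ℕ) (p : Finset ℕ × Finset ℕ) : Decidable (StaysAbove n p) :=
  inferInstanceAs (Decidable (∀ i < n, _ < _))

def swapAt (i : ℕ) (p : Finset ℕ × Finset ℕ) : Finset ℕ × Finset ℕ :=
  ({x ∈ p.1 | x ≤ i} ∪ {y ∈ p.2 | i < y}, {y ∈ p.2 | y ≤ i} ∪ {x ∈ p.1 | i < x})

def shiftedPairs (n k : ℕ) : Finset (Finset ℕ × Finset ℕ) :=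
  powersetCard k (range n) ×ˢ powersetCard k (Ico 1 (n + 1))

def reflectedPairs (n k : ℕ) : Finset (Finset ℕ × Finset ℕ) :=
  powersetCard k (range (n + 1)) ×ˢ powersetCard k (Ico 1 n)

variable {n k i j : ℕ} {p q : Finset ℕ × Finset ℕ}

lemma swapAt_swapAt (i : ℕ) (p : Finset ℕ × Finset ℕ) : swapAt i (swapAt i p) = p := by
  ext x <;> simp only [swapAt, mem_union, mem_filter] <;> grind

lemma touches_swapAt_iff (hji : j ≤ i) : Touches (swapAt i p) j ↔ Touches p j := by
  have h₁ : {x ∈ (swapAt i p).1 | x ≤ j} = {x ∈ p.1 | x ≤ j} := by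
    ext x; simp only [swapAt, mem_union, mem_filter]; grind
  have h₂ : {y ∈ (swapAt i p).2 | y ≤ j} = {y ∈ p.2 | y ≤ j} := by
    ext x; simp only [swapAt, mem_union, mem_filter]; grind
  rw [Touches, Touches, h₁, h₂]

lemma card_swapAt (h : Touches p i) : #(swapAt i p).1 = #p.2 ∧ #(swapAt i p).2 = #p.1 := by
  have hsplit : ∀ A : Finset ℕ, #{x ∈ A | x ≤ i} + #{x ∈ A | i < x} = #A := fun A => by
    simpa only [not_le] using card_filter_add_card_filter_not (s := A) (· ≤ i)
  have hdisj : ∀ A B : Finset ℕ, Disjoint {x ∈ A | x ≤ i} {y ∈ B | i < y} := fun A B =>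
    disjoint_left.2 fun x hx hx' => by simp only [mem_filter] at hx hx'; omega
  unfold Touches at h
  simp only [swapAt, card_union_of_disjoint (hdisj _ _)]
  have := hsplit p.1
  have := hsplit p.2
  constructor <;> omega

lemma exists_le_eq_zero_of_sub_one_le {f : ℕ → ℤ} (hf : ∀ j, f j - 1 ≤ f (j + 1)) (h₀ : 0 ≤ f 0)
    (hi : f i ≤ 0) : ∃ j ≤ i, f j = 0 := by
  induction i with
  | zero => exact ⟨0, le_rfl, by omega⟩
  | succ i ih =>
    by_cases h : f i ≤ 0
    · obtain ⟨j, hj, hfj⟩ := ih h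
      exact ⟨j, by omega, hfj⟩
    · exact ⟨i + 1, le_rfl, by have := hf i; omega⟩

lemma card_filter_le_add_one (A : Finset ℕ) (j : ℕ) :
    (#{x ∈ A | x ≤ j + 1} : ℤ) = #{x ∈ A | x ≤ j} + if j + 1 ∈ A then 1 else 0 := by
  simp only [card_filter_le_eq_card_filter_lt_add A (j + 1), Nat.lt_add_one_iff]

lemma exists_touches_of_card_le (h₀ : 0 ∉ p.2) (hi : #{x ∈ p.1 | x ≤ i} ≤ #{y ∈ p.2 | y ≤ i}) :
    ∃ j ≤ i, Touches p j := by
  have hstep : ∀ j, ((#{x ∈ p.1 | x ≤ j} : ℤ) - #{y ∈ p.2 | y ≤ j}) - 1 ≤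
      (#{x ∈ p.1 | x ≤ j + 1} : ℤ) - #{y ∈ p.2 | y ≤ j + 1} := fun j => by
    simp only [card_filter_le_add_one]
    split_ifs <;> omega
  have hbase : {y ∈ p.2 | y ≤ 0} = ∅ :=
    filter_eq_empty_iff.2 fun y hy hy0 => h₀ (Nat.le_zero.1 hy0 ▸ hy)
  obtain ⟨j, hj, hfj⟩ := exists_le_eq_zero_of_sub_one_le hstep (by rw [hbase]; simp) (by simpa)
  exact ⟨j, hj, by unfold Touches; omega⟩

lemma not_staysAbove_iff_exists_touches (h₀ : 0 ∉ p.2) :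
    ¬ StaysAbove n p ↔ ∃ i < n, Touches p i := by
  simp only [StaysAbove, not_forall, not_lt, exists_prop]
  constructor
  · rintro ⟨i, hi, hle⟩
    obtain ⟨j, hj, hjt⟩ := exists_touches_of_card_le h₀ hle
    exact ⟨j, hj.trans_lt hi, hjt⟩
  · rintro ⟨i, hi, ht⟩
    exact ⟨i, hi, ht.ge⟩

lemma zero_notMem_of_mem_shiftedPairs (hp : p ∈ shiftedPairs n k) : 0 ∉ p.2 := fun h => by
  simpa using (mem_powersetCard.1 (mem_product.1 hp).2).1 h

lemma exists_touches_of_mem_reflectedPairs (hk : 1 ≤ k) (hq : q ∈ reflectedPairs n k) :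
    ∃ i < n, Touches q i := by
  simp only [reflectedPairs, mem_product, mem_powersetCard, subset_iff, mem_range, mem_Ico] at hq
  obtain ⟨⟨hX, hXk⟩, hY, hYk⟩ := hq
  obtain ⟨y, hy⟩ := card_pos.1 (hYk ▸ hk : 0 < #q.2)
  have hYn : {y ∈ q.2 | y ≤ n - 1} = q.2 := filter_true_of_mem fun y hy => by grind
  obtain ⟨j, hj, hjt⟩ := exists_touches_of_card_le (p := q) (i := n - 1) (fun h => by grind)
    (by rw [hYn, hYk, ← hXk]; exact card_filter_le _ _)
  exact ⟨j, by grind, hjt⟩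

lemma swapAt_mem_reflectedPairs (hp : p ∈ shiftedPairs n k) (hi : i < n) (h : Touches p i) :
    swapAt i p ∈ reflectedPairs n k := by
  simp only [shiftedPairs, reflectedPairs, mem_product, mem_powersetCard, subset_iff, mem_range,
    mem_Ico] at hp ⊢
  obtain ⟨⟨hA, hAk⟩, hB, hBk⟩ := hp
  refine ⟨⟨fun x hx => ?_, (card_swapAt h).1.trans hBk⟩, fun x hx => ?_,
    (card_swapAt h).2.trans hAk⟩ <;> simp only [swapAt, mem_union, mem_filter] at hx <;> grind

lemma swapAt_mem_shiftedPairs (hq : q ∈ reflectedPairs n k) (hi : i < n) (h : Touches q i) :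
    swapAt i q ∈ shiftedPairs n k := by
  simp only [shiftedPairs, reflectedPairs, mem_product, mem_powersetCard, subset_iff, mem_range,
    mem_Ico] at hq ⊢
  obtain ⟨⟨hX, hXk⟩, hY, hYk⟩ := hq
  refine ⟨⟨fun x hx => ?_, (card_swapAt h).1.trans hYk⟩, fun x hx => ?_,
    (card_swapAt h).2.trans hXk⟩ <;> simp only [swapAt, mem_union, mem_filter] at hx <;> grind

noncomputable def firstTouch (n : ℕ) (p : Finset ℕ × Finset ℕ) : ℕ :=
  sInf {i | i < n ∧ Touches p i}

lemma firstTouch_spec (h : ∃ i < n, Touches p i) :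
    firstTouch n p < n ∧ Touches p (firstTouch n p) :=
  Nat.sInf_mem h

lemma firstTouch_swapAt (h : ∃ i < n, Touches p i) :
    firstTouch n (swapAt (firstTouch n p) p) = firstTouch n p := by
  obtain ⟨hlt, ht⟩ := firstTouch_spec h
  have ht' := (touches_swapAt_iff le_rfl).2 ht
  refine le_antisymm (Nat.sInf_le ⟨hlt, ht'⟩) (le_csInf ⟨_, hlt, ht'⟩ fun j ⟨hj, hjt⟩ => ?_)
  by_contra! hjf
  exact hjf.not_ge (Nat.sInf_le ⟨hj, (touches_swapAt_iff hjf.le).1 hjt⟩)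

noncomputable def reflectAtFirstTouch (n : ℕ) (p : Finset ℕ × Finset ℕ) : Finset ℕ × Finset ℕ :=
  swapAt (firstTouch n p) p

lemma exists_touches_reflectAtFirstTouch (h : ∃ i < n, Touches p i) :
    ∃ i < n, Touches (reflectAtFirstTouch n p) i :=
  ⟨_, (firstTouch_spec h).1, (touches_swapAt_iff le_rfl).2 (firstTouch_spec h).2⟩

lemma reflectAtFirstTouch_reflectAtFirstTouch (h : ∃ i < n, Touches p i) :
    reflectAtFirstTouch n (reflectAtFirstTouch n p) = p := by
  rw [reflectAtFirstTouch, reflectAtFirstTouch, firstTouch_swapAt h, swapAt_swapAt]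

theorem card_filter_staysAbove_add_card_reflectedPairs (n : ℕ) (hk : 1 ≤ k) :
    #{p ∈ shiftedPairs n k | StaysAbove n p} + #(reflectedPairs n k) = #(shiftedPairs n k) := by
  suffices #{p ∈ shiftedPairs n k | ¬ StaysAbove n p} = #(reflectedPairs n k) by
    rw [← this, card_filter_add_card_filter_not]
  have htouch : ∀ p ∈ shiftedPairs n k, ¬ StaysAbove n p ↔ ∃ i < n, Touches p i := fun p hp =>
    not_staysAbove_iff_exists_touches (zero_notMem_of_mem_shiftedPairs hp)
  refine card_nbij' (reflectAtFirstTouch n) (reflectAtFirstTouch n) (fun p hp => ?_)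
    (fun q hq => ?_) (fun p hp => ?_) (fun q hq => ?_)
  · obtain ⟨hp, ht⟩ := mem_filter.1 hp
    have ht := (htouch p hp).1 ht
    exact swapAt_mem_reflectedPairs hp (firstTouch_spec ht).1 (firstTouch_spec ht).2
  · have ht := exists_touches_of_mem_reflectedPairs hk hq
    have hmem := swapAt_mem_shiftedPairs hq (firstTouch_spec ht).1 (firstTouch_spec ht).2
    exact mem_filter.2 ⟨hmem, (htouch _ hmem).2 (exists_touches_reflectAtFirstTouch ht)⟩
  · obtain ⟨hp, ht⟩ := mem_filter.1 hp
    exact reflectAtFirstTouch_reflectAtFirstTouch ((htouch p hp).1 ht)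
  · exact reflectAtFirstTouch_reflectAtFirstTouch (exists_touches_of_mem_reflectedPairs hk hq)

lemma card_shiftedPairs (n k : ℕ) : #(shiftedPairs n k) = n.choose k * n.choose k := by
  simp [shiftedPairs]

lemma card_reflectedPairs (n k : ℕ) :
    #(reflectedPairs n k) = (n + 1).choose k * (n - 1).choose k := by
  simp [reflectedPairs]

end Reflection

lemma isBallot_iff_staysAbove {n : ℕ} {S T : Finset (Fin n)} :
    IsBallot S T ↔ StaysAbove n (S.map Fin.valEmbedding,
      T.map (Fin.valEmbedding.trans (addRightEmbedding 1))) := by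
  simp only [IsBallot, StaysAbove, levelAt, filter_map, card_map, sub_pos, Nat.cast_lt,
    Fin.forall_iff]
  rfl

lemma card_ballot_eq_card_filter_staysAbove (n k : ℕ) :
    #{p ∈ powersetCard k (univ : Finset (Fin n)) ×ˢ powersetCard k univ | IsBallot p.1 p.2} =
      #{p ∈ shiftedPairs n k | StaysAbove n p} := by
  set e₁ := Fin.valEmbedding.trans (addRightEmbedding 1)
  have h₀ : (univ : Finset (Fin n)).map Fin.valEmbedding = range n := by
    rw [Fin.map_valEmbedding_univ, Nat.Iio_eq_range]
  have h₁ : (univ : Finset (Fin n)).map e₁ = Ico 1 (n + 1) := by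
    rw [← map_map, Fin.map_valEmbedding_univ, Nat.Iio_eq_range, range_eq_Ico, map_add_right_Ico]
  refine card_bij (fun p _ => (p.1.map Fin.valEmbedding, p.2.map e₁)) (fun p hp => ?_)
    (fun p _ q _ h => ?_) fun q hq => ?_
  · simp only [mem_filter, mem_product, mem_powersetCard_univ] at hp
    simp only [shiftedPairs, mem_filter, mem_product, mem_powersetCard, card_map]
    exact ⟨⟨⟨h₀ ▸ map_subset_map.2 (subset_univ _), hp.1.1⟩,
      h₁ ▸ map_subset_map.2 (subset_univ _), hp.1.2⟩, isBallot_iff_staysAbove.1 hp.2⟩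
  · simp only [Prod.mk.injEq, map_inj] at h
    exact Prod.ext h.1 h.2
  · simp only [shiftedPairs, mem_filter, mem_product, mem_powersetCard] at hq
    obtain ⟨⟨⟨hA, hAk⟩, hB, hBk⟩, hq⟩ := hq
    obtain ⟨S, -, hS⟩ := subset_map_iff.1 (h₀ ▸ hA)
    obtain ⟨T, -, hT⟩ := subset_map_iff.1 (h₁ ▸ hB)
    rw [hS, card_map] at hAk
    rw [hT, card_map] at hBk
    have hST : (S.map Fin.valEmbedding, T.map e₁) = q := Prod.ext hS.symm hT.symm
    refine ⟨(S, T), ?_, hST⟩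
    simp only [mem_filter, mem_product, mem_powersetCard_univ]
    exact ⟨⟨hAk, hBk⟩, isBallot_iff_staysAbove.2 (hST ▸ hq)⟩

lemma mul_choose_mul_choose_eq (n k : ℕ) (hk : 1 ≤ k) :
    n * (n.choose k * n.choose k) =
      n.choose k * n.choose (k - 1) + n * ((n + 1).choose k * (n - 1).choose k) := by
  obtain ⟨k, rfl⟩ := Nat.exists_eq_add_of_le' hk
  rcases n with _ | m
  · simp
  simp only [Nat.add_sub_cancel]
  rcases lt_or_ge m k with hmk | hkm
  · simp [Nat.choose_eq_zero_of_lt (by omega : m + 1 < k + 1),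
      Nat.choose_eq_zero_of_lt (by omega : m < k + 1)]
  obtain ⟨d, rfl⟩ := Nat.exists_eq_add_of_le hkm
  have pascal := Nat.choose_succ_succ' (k + d + 1) k
  have e₁ := Nat.choose_mul_succ_eq (k + d) (k + 1)
  have e₂ := Nat.choose_succ_right_eq (k + d + 1) k
  rw [show k + d + 1 - (k + 1) = d by omega] at e₁
  rw [show k + d + 1 - k = d + 1 by omega] at e₂
  rw [pascal]
  linear_combination ((k + d + 1).choose (k + 1)) * e₂ -
    ((k + d + 1).choose (k + 1) + (k + d + 1).choose k) * e₁

/-- The number of noncrossing set partitions of `[n]` with exactly `k` blocks equals the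
Narayana number `Nar(n,k) = (1/n)·binom(n,k)·binom(n,k−1)` (cleared-denominator form). -/
theorem noncrossing_card_eq_narayana (n k : ℕ) (hk : 1 ≤ k) :
    n * Nat.card {π : Finpartition (Finset.univ : Finset (Fin n)) //
        Noncrossing π ∧ π.parts.card = k}
      = n.choose k * n.choose (k - 1) := by
  have hreflect := card_filter_staysAbove_add_card_reflectedPairs n hk
  rw [card_shiftedPairs, card_reflectedPairs] at hreflect
  have hchoose := mul_choose_mul_choose_eq n k hk
  rw [card_noncrossing_eq_card_ballot, card_ballot_eq_card_filter_staysAbove]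
  rw [← hreflect, mul_add] at hchoose
  omega
end

section
/- For any four pairwise disjoint subsets A, B, {i}, {i+1} of [n] (with i, i+1 ∉ A ∪ B), the ψ-operators satisfy the skein operator identity ψ_{A∪{i+1}} ∘ ψ_{B∪{i}} + ψ_{A∪{i}} ∘ ψ_{B∪{i+1}} + ψ_{A∪B} ∘ ψ_{{i,i+1}} − ψ_A ∘ ψ_{B∪{i,i+1}} − ψ_{A∪{i,i+1}} ∘ ψ_B = 0 as linear operators on Λ{Θ_n,Ξ_n}. -/
open Finset

/-- The index set for the `2n` fermionic generators `θ₁,…,θₙ,ξ₁,…,ξₙ`: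
`Sum.inl i` is `θ_i`, `Sum.inr i` is `ξ_i`. -/
abbrev Gen (n : ℕ) := Fin n ⊕ Fin n

/-- The position of a generator in the fixed order `θ₁ < ⋯ < θₙ < ξ₁ < ⋯ < ξₙ`. -/
def gidx {n : ℕ} : Gen n → ℕ
  | .inl i => (i : ℕ)
  | .inr i => n + (i : ℕ)

/-- The exterior algebra `∧{Θ_n, Ξ_n}` over `ℂ`, modeled by coefficient functions
on the basis of monomials `θ_S · ξ_T`, a monomial being indexed by a subset of the
`2n` generators. -/
abbrev ExtA (n : ℕ) := Finset (Gen n) → ℂ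

/-- The basis monomial indexed by a set of generators (product taken in the fixed order). -/
noncomputable def emon {n : ℕ} (S : Finset (Gen n)) : ExtA n := fun T => if T = S then 1 else 0

/-- The generator `θ_i`. -/
noncomputable def theta {n : ℕ} (i : Fin n) : ExtA n := emon {Sum.inl i}

/-- The generator `ξ_i`. -/
noncomputable def xi {n : ℕ} (i : Fin n) : ExtA n := emon {Sum.inr i}

/-- The sign `(-1)^{#inversions}` obtained when concatenating the sorted monomial on `S`
with the sorted monomial on `T` and re-sorting. -/
noncomputable def msign {n : ℕ} (S T : Finset (Gen n)) : ℂ :=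
  (-1 : ℂ) ^ (((S ×ˢ T).filter (fun p => gidx p.2 < gidx p.1)).card)

/-- Multiplication in the exterior algebra `∧{Θ_n, Ξ_n}`. -/
noncomputable def emul {n : ℕ} (f g : ExtA n) : ExtA n :=
  fun U => ∑ S ∈ U.powerset, msign S (U \ S) * f S * g (U \ S)

/-- The inner product on `∧{Θ_n, Ξ_n}` making the monomials `θ_S · ξ_T` orthonormal. -/
noncomputable def einner {n : ℕ} (f g : ExtA n) : ℂ :=
  ∑ S : Finset (Gen n), f S * g S

/-- The contraction (exterior differentiation) action `f ⊙ h`: on generators,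
`ω_i ⊙ (ω_{j_1} ⋯ ω_{j_r})` removes `ω_i` with the sign `(-1)^{s-1}` if `j_s = i`
and gives `0` otherwise, extended bilinearly (on a monomial `ω_S`, it is the
composite of the single contractions). -/
noncomputable def odot {n : ℕ} (f h : ExtA n) : ExtA n :=
  fun T => ∑ S : Finset (Gen n), if Disjoint S T then msign S T * f S * h (S ∪ T) else 0

/-- The sign produced when the permutation `w` reorders the (sorted) monomial on `S`. -/
noncomputable def actsign {n : ℕ} (w : Equiv.Perm (Fin n)) (S : Finset (Gen n)) : ℂ :=
  (-1 : ℂ) ^ (((S ×ˢ S).filter (fun p =>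
      gidx p.1 < gidx p.2 ∧
        gidx (Equiv.sumCongr w w p.2) < gidx (Equiv.sumCongr w w p.1))).card)

/-- The diagonal action of a permutation `w ∈ S_n` on `∧{Θ_n, Ξ_n}`:
`w · θ_i = θ_{w(i)}`, `w · ξ_i = ξ_{w(i)}`, extended as an algebra automorphism. -/
noncomputable def pact {n : ℕ} (w : Equiv.Perm (Fin n)) (f : ExtA n) : ExtA n :=
  fun T =>
    actsign w (T.map (Equiv.sumCongr w w).symm.toEmbedding) *
      f (T.map (Equiv.sumCongr w w).symm.toEmbedding)

/-- The block operator `ρ_B`: for `|B| > 1`, `ρ_B(f) = ∑_{i ≠ j ∈ B} ξ_i · (θ_j ⊙ f)`;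
for `B = {i}`, `ρ_B(f) = ξ_i · (θ_i ⊙ f)`. -/
noncomputable def rho {n : ℕ} (B : Finset (Fin n)) (f : ExtA n) : ExtA n :=
  if 1 < B.card then
    ∑ i ∈ B, ∑ j ∈ B.erase i, emul (xi i) (odot (theta j) f)
  else
    ∑ i ∈ B, emul (xi i) (odot (theta i) f)

/-- The operator `ψ_B`, equal to `ρ_B` when `|B| > 1` and `0` when `|B| ≤ 1`. -/
noncomputable def psi {n : ℕ} (B : Finset (Fin n)) (f : ExtA n) : ExtA n :=
  if 1 < B.card then rho B f else 0

/-- The two-set operator `ψ_{A,B}(f) = ∑_{a ∈ A, b ∈ B} [ξ_a·(θ_b ⊙ f) + ξ_b·(θ_a ⊙ f)]`. -/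
noncomputable def psiPair {n : ℕ} (A B : Finset (Fin n)) (f : ExtA n) : ExtA n :=
  ∑ a ∈ A, ∑ b ∈ B, (emul (xi a) (odot (theta b) f) + emul (xi b) (odot (theta a) f))

/-- The composite operator `ρ_π = ρ_{B_1} ∘ ⋯ ∘ ρ_{B_k}` over the blocks of `π`
(the order of composition is immaterial since block operators commute). -/
noncomputable def rhoPartition {n : ℕ} (π : Finpartition (Finset.univ : Finset (Fin n))) :
    ExtA n → ExtA n :=
  π.parts.toList.foldr (fun B g => rho B ∘ g) id

/-- The top monomial `θ_1 θ_2 ⋯ θ_n`. -/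
noncomputable def topTheta (n : ℕ) : ExtA n :=
  emon ((Finset.univ : Finset (Fin n)).image Sum.inl)

/-- The fermion `F_π := ρ_π(θ_1 θ_2 ⋯ θ_n)` attached to a set partition `π` of `[n]`. -/
noncomputable def Fperm {n : ℕ} (π : Finpartition (Finset.univ : Finset (Fin n))) : ExtA n :=
  rhoPartition π (topTheta n)

/-- The fermion `f_π := (ξ_1 + ⋯ + ξ_n) ⊙ F_π`. -/
noncomputable def fperm {n : ℕ} (π : Finpartition (Finset.univ : Finset (Fin n))) : ExtA n :=
  odot (∑ i : Fin n, xi i) (Fperm π)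

/-!
Write `L a b = ξ_a · (θ_b ⊙ ·)`, so that `ψ_X = ∑_{a ≠ b ∈ X} L a b`. Multiplications by the
`ξ`'s and contractions by the `θ`'s pairwise anticommute, hence the `L a b` commute with each
other and `L a b ∘ L c d` is antisymmetric both in `(a, c)` and in `(b, d)`.
For disjoint `X`, `Y` one has `ψ_{X ∪ Y} = ψ_X + ψ_Y + Q(X, Y)` with
`Q(X, Y) = ∑_{a ∈ X, b ∈ Y} (L a b + L b a)`. Expanding the five composites this way, all terms
cancel except `Q(j, A) Q(i, B) + Q(i, A) Q(j, B) + Q(A, B) Q(i, j)`, which vanishes termwise by a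
three-term identity for `q a b = L a b + L b a` that follows from the two antisymmetries.
-/

section PairSum

variable {ι R : Type*} [Ring R] (L : ι → ι → R)

def crossSum (X Y : Finset ι) : R := ∑ a ∈ X, ∑ b ∈ Y, (L a b + L b a)

variable [DecidableEq ι]

def pairSum (X : Finset ι) : R := ∑ a ∈ X, ∑ b ∈ X.erase a, L a b

variable {L}

lemma pairSum_of_card_le_one {X : Finset ι} (hX : #X ≤ 1) : pairSum L X = 0 :=
  sum_eq_zero fun a ha => by
    rw [(card_eq_zero.mp (by rw [card_erase_of_mem ha]; omega) : X.erase a = ∅), sum_empty]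

lemma pairSum_union {X Y : Finset ι} (hXY : Disjoint X Y) :
    pairSum L (X ∪ Y) = pairSum L X + pairSum L Y + crossSum L X Y := by
  have hX : ∀ a ∈ X, (X ∪ Y).erase a = X.erase a ∪ Y := fun a ha => by
    rw [erase_union_distrib, erase_eq_of_notMem (disjoint_left.mp hXY ha)]
  have hY : ∀ a ∈ Y, (X ∪ Y).erase a = X ∪ Y.erase a := fun a ha => by
    rw [erase_union_distrib, erase_eq_of_notMem (disjoint_right.mp hXY ha)]
  simp only [pairSum, crossSum, sum_union hXY, sum_add_distrib]
  rw [sum_congr rfl fun a ha => by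
      rw [hX a ha, sum_union (disjoint_of_subset_left (erase_subset _ _) hXY)],
    sum_congr (s₁ := Y) rfl fun a ha => by
      rw [hY a ha, sum_union (disjoint_of_subset_right (erase_subset _ _) hXY)],
    sum_add_distrib, sum_add_distrib, sum_comm (s := Y)]
  abel

lemma pairSum_insert {a : ι} {X : Finset ι} (ha : a ∉ X) :
    pairSum L (insert a X) = pairSum L X + crossSum L {a} X := by
  rw [insert_eq, pairSum_union (disjoint_singleton_left.mpr ha),
    pairSum_of_card_le_one (card_singleton a).le, zero_add]

lemma crossSum_insert_right {a : ι} (X : Finset ι) {Y : Finset ι} (ha : a ∉ Y) :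
    crossSum L X (insert a Y) = crossSum L X {a} + crossSum L X Y := by
  simp only [crossSum, sum_insert ha, sum_singleton, sum_add_distrib]

variable (hcomm : ∀ a b c d, Commute (L a b) (L c d))
include hcomm

lemma commute_pairSum_crossSum (X Y Z : Finset ι) : Commute (pairSum L X) (crossSum L Y Z) :=
  .sum_left _ _ _ fun _ _ => .sum_left _ _ _ fun _ _ => .sum_right _ _ _ fun _ _ =>
    .sum_right _ _ _ fun _ _ => (hcomm _ _ _ _).add_right (hcomm _ _ _ _)

variable (hanti : ∀ a b c d, L a b * L c d = -(L a d * L c b))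
include hanti

omit [DecidableEq ι] in
lemma symm_mul_symm_add_cyclic_eq_zero (a b i j : ι) :
    (L j a + L a j) * (L i b + L b i) + (L i a + L a i) * (L j b + L b j)
      + (L a b + L b a) * (L i j + L j i) = 0 := by
  have hanti' : ∀ a b c d, L a b * L c d = -(L c b * L a d) := fun a b c d => by
    rw [hanti, (hcomm _ _ _ _).eq]
  simp only [mul_add, add_mul]
  -- the twelve products cancel in six pairs: three differ by a swap of the `ξ`-indices
  -- (`hanti'`), three by a swap of the `θ`-indices (`hanti`)
  rw [hanti' j a i b, hanti' j a b i, hanti a j i b, hanti a j b i, hanti' i a b j, hanti a i j b]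
  abel

omit [DecidableEq ι] in
lemma crossSum_skein {i j : ι} (A B : Finset ι) :
    crossSum L {j} A * crossSum L {i} B + crossSum L {i} A * crossSum L {j} B
      + crossSum L A B * crossSum L {i} {j} = 0 := by
  simp only [crossSum, sum_singleton]
  rw [sum_mul_sum, sum_mul_sum, sum_mul]
  simp only [sum_mul, ← sum_add_distrib]
  exact sum_eq_zero fun a _ => sum_eq_zero fun b _ =>
    symm_mul_symm_add_cyclic_eq_zero hcomm hanti a b i j

theorem pairSum_skein {i j : ι} {A B : Finset ι} (hij : i ≠ j) (hAB : Disjoint A B)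
    (hiA : i ∉ A) (hiB : i ∉ B) (hjA : j ∉ A) (hjB : j ∉ B) :
    pairSum L (insert j A) * pairSum L (insert i B)
      + pairSum L (insert i A) * pairSum L (insert j B)
      + pairSum L (A ∪ B) * pairSum L {i, j}
      - pairSum L A * pairSum L (insert i (insert j B))
      - pairSum L (insert i (insert j A)) * pairSum L B = 0 := by
  have hi : ∀ {X : Finset ι}, i ∉ X → i ∉ insert j X := fun h => by simp [hij, h]
  rw [pairSum_insert hiA, pairSum_insert hiB, pairSum_insert hjA, pairSum_insert hjB,
    pairSum_insert (hi hiA), pairSum_insert (hi hiB), pairSum_insert hjA, pairSum_insert hjB,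
    crossSum_insert_right _ hjA, crossSum_insert_right _ hjB, pairSum_union hAB,
    pairSum_insert (by simpa using hij), pairSum_of_card_le_one (card_singleton j).le, zero_add]
  calc _ = crossSum L {j} A * crossSum L {i} B + crossSum L {i} A * crossSum L {j} B
        + crossSum L A B * crossSum L {i} {j}
        + (pairSum L B * crossSum L {i} {j} - crossSum L {i} {j} * pairSum L B) := by
        noncomm_ring
    _ = 0 := by
      rw [crossSum_skein hcomm hanti, (commute_pairSum_crossSum hcomm B {i} {j}).eq, sub_self,
        add_zero]

end PairSum

section Anticommuting

variable {ι R : Type*} [Ring R] {x d : ι → R} (hd : ∀ a b, d a * d b = -(d b * d a))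
  (hdx : ∀ a b, d a * x b = -(x b * d a))
include hdx

lemma mul_mul_mul_of_anticomm (a b c e : ι) :
    x a * d b * (x c * d e) = -(x a * x c * (d b * d e)) := by
  rw [mul_assoc, ← mul_assoc (d b), hdx]
  simp only [neg_mul, mul_neg, mul_assoc]

include hd

lemma commute_mul_of_anticomm (hx : ∀ a b, x a * x b = -(x b * x a)) (a b c e : ι) :
    Commute (x a * d b) (x c * d e) := by
  rw [Commute, SemiconjBy, mul_mul_mul_of_anticomm hdx, mul_mul_mul_of_anticomm hdx, hx c, hd e]
  simp only [neg_mul, mul_neg, neg_neg]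

lemma mul_mul_swap_of_anticomm (a b c e : ι) :
    x a * d b * (x c * d e) = -(x a * d e * (x c * d b)) := by
  rw [mul_mul_mul_of_anticomm hdx, mul_mul_mul_of_anticomm hdx, hd e, mul_neg, neg_neg]

end Anticommuting

variable {n : ℕ}

lemma gidx_injective : Function.Injective (gidx (n := n)) := by
  rintro (a | a) (b | b) h <;>
    simp only [gidx, Sum.inl.injEq, Sum.inr.injEq, reduceCtorEq] at h ⊢ <;> omega

lemma msign_singleton (x : Gen n) (T : Finset (Gen n)) :
    msign {x} T = (-1) ^ #(T.filter fun t => gidx t < gidx x) := by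
  rw [msign, singleton_product, filter_map, card_map]
  rfl

lemma msign_singleton_insert (x y : Gen n) {T : Finset (Gen n)} (hy : y ∉ T) :
    msign {x} (insert y T) = (if gidx y < gidx x then -1 else 1) * msign {x} T := by
  rw [msign_singleton, msign_singleton, filter_insert]
  split_ifs
  · rw [card_insert_of_notMem (by simp [hy]), pow_succ, mul_comm]
  · rw [one_mul]

lemma odot_emon_singleton_apply (x : Gen n) (h : ExtA n) (T : Finset (Gen n)) :
    odot (emon {x}) h T = if x ∈ T then 0 else msign {x} T * h (insert x T) := by
  rw [odot, sum_eq_single {x} (fun S _ hS => by simp [emon, hS]) (by simp)]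
  by_cases hx : x ∈ T <;> simp [hx, emon]

lemma emul_emon_singleton_apply (x : Gen n) (g : ExtA n) (U : Finset (Gen n)) :
    emul (emon {x}) g U = if x ∈ U then msign {x} (U.erase x) * g (U.erase x) else 0 := by
  split_ifs with hx
  · rw [emul, sum_eq_single {x} (fun S _ hS => by simp [emon, hS])
      fun h => absurd (by simpa using hx) h]
    simp [emon, sdiff_singleton_eq_erase]
  · exact sum_eq_zero fun S hS => by
      have : S ≠ {x} := by rintro rfl; simp_all
      simp [emon, this]

lemma sign_gidx_swap {x y : Gen n} (hxy : x ≠ y) :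
    (if gidx y < gidx x then (-1 : ℂ) else 1) = -(if gidx x < gidx y then -1 else 1) := by
  rcases (gidx_injective.ne hxy).lt_or_gt with h | h <;> simp [h, lt_asymm h]

noncomputable def emulLeft (f : ExtA n) : Module.End ℂ (ExtA n) where
  toFun := emul f
  map_add' g h := funext fun U => by simp only [emul, Pi.add_apply, mul_add, sum_add_distrib]
  map_smul' c g := funext fun U => by
    simp only [emul, Pi.smul_apply, smul_eq_mul, RingHom.id_apply, mul_sum]
    exact sum_congr rfl fun _ _ => by ring

noncomputable def odotLeft (f : ExtA n) : Module.End ℂ (ExtA n) where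
  toFun := odot f
  map_add' g h := funext fun T => by
    simp only [odot, Pi.add_apply, ← sum_add_distrib]
    exact sum_congr rfl fun _ _ => by split_ifs <;> ring
  map_smul' c g := funext fun T => by
    simp only [odot, Pi.smul_apply, smul_eq_mul, RingHom.id_apply, mul_sum]
    exact sum_congr rfl fun _ _ => by split_ifs <;> ring

@[simp] lemma emulLeft_apply (f g : ExtA n) : emulLeft f g = emul f g := rfl

@[simp] lemma odotLeft_apply (f g : ExtA n) : odotLeft f g = odot f g := rfl

lemma odotLeft_emon_anticomm (x y : Gen n) :
    odotLeft (emon {x}) * odotLeft (emon {y}) = -(odotLeft (emon {y}) * odotLeft (emon {x})) := by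
  refine LinearMap.ext fun h => funext fun T => ?_
  simp only [Module.End.mul_apply, LinearMap.neg_apply, odotLeft_apply, odot_emon_singleton_apply,
    Pi.neg_apply, mem_insert]
  by_cases hxy : x = y
  · subst hxy; simp
  by_cases hT : x ∈ T ∨ y ∈ T
  · aesop
  obtain ⟨hxT, hyT⟩ := not_or.mp hT
  simp only [hxT, hyT, Ne.symm hxy, hxy, or_self, if_false]
  rw [msign_singleton_insert y x hxT, msign_singleton_insert x y hyT, insert_comm,
    sign_gidx_swap hxy]
  ring

lemma emulLeft_emon_anticomm (x y : Gen n) :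
    emulLeft (emon {x}) * emulLeft (emon {y}) = -(emulLeft (emon {y}) * emulLeft (emon {x})) := by
  refine LinearMap.ext fun g => funext fun U => ?_
  simp only [Module.End.mul_apply, LinearMap.neg_apply, emulLeft_apply, emul_emon_singleton_apply,
    Pi.neg_apply, mem_erase]
  by_cases hxy : x = y
  · subst hxy; simp
  by_cases hU : x ∈ U ∧ y ∈ U
  · obtain ⟨T, hxT, hyT, rfl⟩ : ∃ T, x ∉ T ∧ y ∉ T ∧ U = insert x (insert y T) :=
      ⟨(U.erase x).erase y, by simp, by simp, by
        rw [insert_erase (mem_erase.mpr ⟨Ne.symm hxy, hU.2⟩), insert_erase hU.1]⟩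
    have hxyT : x ∉ insert y T := by simp [hxy, hxT]
    have hyx : y ≠ x := Ne.symm hxy
    rw [if_pos hU.1, if_pos hU.2, erase_insert hxyT, erase_insert_of_ne hxy, erase_insert hyT,
      if_pos ⟨hyx, hU.2⟩, if_pos ⟨hxy, hU.1⟩, erase_insert hxT, msign_singleton_insert x y hyT,
      msign_singleton_insert y x hxT, sign_gidx_swap hxy]
    ring
  · aesop

lemma odotLeft_emon_mul_emulLeft_emon {x y : Gen n} (hxy : x ≠ y) :
    odotLeft (emon {x}) * emulLeft (emon {y}) = -(emulLeft (emon {y}) * odotLeft (emon {x})) := by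
  refine LinearMap.ext fun g => funext fun T => ?_
  simp only [Module.End.mul_apply, LinearMap.neg_apply, emulLeft_apply, odotLeft_apply,
    emul_emon_singleton_apply, odot_emon_singleton_apply, Pi.neg_apply]
  by_cases hT : x ∉ T ∧ y ∈ T
  · obtain ⟨T, hyT, rfl⟩ : ∃ T', y ∉ T' ∧ T = insert y T' :=
      ⟨T.erase y, notMem_erase y T, (insert_erase hT.2).symm⟩
    have hxT : x ∉ T := fun h => hT.1 (mem_insert_of_mem h)
    rw [if_neg hT.1, if_pos hT.2, if_pos (mem_insert_of_mem hT.2), erase_insert hyT, if_neg hxT,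
      insert_comm, erase_insert (by simp [Ne.symm hxy, hyT]), msign_singleton_insert x y hyT,
      msign_singleton_insert y x hxT, sign_gidx_swap hxy]
    split_ifs <;> ring
  · aesop

lemma psi_apply_eq_pairSum (X : Finset (Fin n)) (f : ExtA n) :
    psi X f = pairSum (fun a b => emulLeft (xi a) * odotLeft (theta b)) X f := by
  rw [psi]
  split_ifs with hX
  · simp [rho, hX, pairSum, LinearMap.sum_apply]
  · rw [pairSum_of_card_le_one (not_lt.mp hX), LinearMap.zero_apply]

/-- The skein operator identity: for pairwise disjoint `A, B, {i}, {i+1} ⊆ [n]`,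
`ψ_{A∪{i+1}}∘ψ_{B∪{i}} + ψ_{A∪{i}}∘ψ_{B∪{i+1}} + ψ_{A∪B}∘ψ_{{i,i+1}}
  − ψ_A∘ψ_{B∪{i,i+1}} − ψ_{A∪{i,i+1}}∘ψ_B = 0`. -/
theorem psi_skein (n : ℕ) (A B : Finset (Fin n)) (i j : Fin n)
    (hij : (i : ℕ) + 1 = (j : ℕ)) (hAB : Disjoint A B)
    (hiA : i ∉ A) (hiB : i ∉ B) (hjA : j ∉ A) (hjB : j ∉ B) (f : ExtA n) :
    psi (insert j A) (psi (insert i B) f) + psi (insert i A) (psi (insert j B) f)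
      + psi (A ∪ B) (psi {i, j} f)
      - psi A (psi (insert i (insert j B)) f)
      - psi (insert i (insert j A)) (psi B f) = 0 := by
  have hd : ∀ b e : Fin n, odotLeft (theta b) * odotLeft (theta e)
      = -(odotLeft (theta e) * odotLeft (theta b)) := fun b e => odotLeft_emon_anticomm _ _
  have hx : ∀ a c : Fin n, emulLeft (xi a) * emulLeft (xi c)
      = -(emulLeft (xi c) * emulLeft (xi a)) := fun a c => emulLeft_emon_anticomm _ _
  have hdx : ∀ b c : Fin n, odotLeft (theta b) * emulLeft (xi c)
      = -(emulLeft (xi c) * odotLeft (theta b)) := fun b c =>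
    odotLeft_emon_mul_emulLeft_emon Sum.inl_ne_inr
  have hne : i ≠ j := Fin.ne_of_val_ne (by omega)
  have := congrArg (· f) (pairSum_skein (commute_mul_of_anticomm hd hdx hx)
    (mul_mul_swap_of_anticomm hd hdx) hne hAB hiA hiB hjA hjB)
  simpa only [psi_apply_eq_pairSum, LinearMap.add_apply, LinearMap.sub_apply, Module.End.mul_apply,
    LinearMap.zero_apply] using this
end
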